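/- arXiv:1801.05397 — 3 statements merged into one kernel-verified Lean document; each statement's English description precedes it below -/
import Mathlib

section
/- Let K be a field with char K ≠ 2. Every isotropic Pfister form over K is hyperbolic. -/
open QuadraticMap

/-- The hyperbolic quadratic form of rank `m` over `K`: on `(Fin m → K) × (Fin m → K)`,
`Q (x, y) = ∑ i, x i * y i` (an orthogonal sum of `m` hyperbolic planes). -/
noncomputable def hyperbolicForm (K : Type*) [Field K] (m : ℕ) :
    QuadraticForm K ((Fin m → K) × (Fin m → K)) :=
  ∑ i : Fin m, QuadraticMap.linMulLin
    ((LinearMap.proj i).comp (LinearMap.fst K (Fin m → K) (Fin m → K)))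
    ((LinearMap.proj i).comp (LinearMap.snd K (Fin m → K) (Fin m → K)))

/-- A quadratic form is hyperbolic if it is equivalent to an orthogonal sum of
hyperbolic planes. -/
def QuadraticForm.IsHyperbolic {K : Type*} [Field K] {V : Type*} [AddCommGroup V]
    [Module K V] (q : QuadraticForm K V) : Prop :=
  ∃ m : ℕ, q.Equivalent (hyperbolicForm K m)

/-- The `n`-fold Pfister form `⟨⟨a₁, …, aₙ⟩⟩ = ⟨1, -a₁⟩ ⊗ ⋯ ⊗ ⟨1, -aₙ⟩`, as the diagonal
form indexed by subsets `s` of `{1, …, n}` with entries `∏_{i ∈ s} (-aᵢ)`. -/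
noncomputable def pfisterForm (K : Type*) [Field K] {n : ℕ} (a : Fin n → K) :
    QuadraticForm K ((Fin n → Bool) → K) :=
  QuadraticMap.weightedSumSquares K
    (fun s : Fin n → Bool => ∏ i : Fin n, if s i then -a i else 1)

namespace PfisterAux

variable {K : Type*} [Field K] {V V₁ V₂ : Type*}
  [AddCommGroup V] [Module K V] [AddCommGroup V₁] [Module K V₁]
  [AddCommGroup V₂] [Module K V₂]

lemma smul_apply' (c : K) (Q : QuadraticForm K V) (x : V) : (c • Q) x = c * Q x :=
  rfl

/-- Scaling preserves equivalence. -/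
lemma equivalent_smul (c : K) {Q₁ : QuadraticForm K V₁} {Q₂ : QuadraticForm K V₂}
    (h : Q₁.Equivalent Q₂) : (c • Q₁).Equivalent (c • Q₂) := by
  obtain ⟨f⟩ := h
  exact ⟨{ f.toLinearEquiv with
    map_app' := fun m => by
      have hm := f.map_app m
      simp only [smul_apply']
      rw [show ((f.toLinearEquiv : V₁ →ₗ[K] V₂)).toFun m = f m from rfl, hm] }⟩

/-- Scaling by a square is an equivalence. -/
lemma equivalent_sq_smul {c : K} (hc : c ≠ 0) (Q : QuadraticForm K V) :
    ((c * c) • Q).Equivalent Q := by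
  refine ⟨{ LinearEquiv.smulOfNeZero K V c hc with map_app' := fun m => ?_ }⟩
  show Q (c • m) = ((c * c) • Q) m
  rw [Q.map_smul, smul_apply', smul_eq_mul]

lemma smul_prod (c : K) (Q₁ : QuadraticForm K V₁) (Q₂ : QuadraticForm K V₂) :
    c • (Q₁.prod Q₂) = (c • Q₁).prod (c • Q₂) := by
  ext x
  simp only [smul_apply', QuadraticMap.prod_apply, mul_add]

/-- An explicit 2×2 "matrix" linear map on `V × V`. -/
def twoByTwo (p q r s : K) : (V × V) →ₗ[K] (V × V) :=
  LinearMap.prod (p • LinearMap.fst K V V + q • LinearMap.snd K V V)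
    (r • LinearMap.fst K V V + s • LinearMap.snd K V V)

lemma twoByTwo_apply (p q r s : K) (x : V × V) :
    twoByTwo p q r s x = (p • x.1 + q • x.2, r • x.1 + s • x.2) := rfl

/-- The 2×2 matrix map is a linear equivalence when the determinant is nonzero. -/
def twoByTwoEquiv (p q r s : K) (h : p * s - q * r ≠ 0) : (V × V) ≃ₗ[K] (V × V) :=
  LinearEquiv.ofLinear (twoByTwo p q r s)
    (twoByTwo ((p * s - q * r)⁻¹ * s) ((p * s - q * r)⁻¹ * -q)
      ((p * s - q * r)⁻¹ * -r) ((p * s - q * r)⁻¹ * p))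
    (by
      apply LinearMap.ext
      rintro ⟨x₁, x₂⟩
      simp only [LinearMap.comp_apply, twoByTwo_apply, LinearMap.id_apply]
      refine Prod.ext ?_ ?_ <;>
        · show _ = _
          match_scalars <;> field_simp <;> ring_nf <;> rw [← neg_mul, ← add_mul, mul_inv_cancel₀ (by contrapose! h; linear_combination h)])
    (by
      apply LinearMap.ext
      rintro ⟨x₁, x₂⟩
      simp only [LinearMap.comp_apply, twoByTwo_apply, LinearMap.id_apply]
      refine Prod.ext ?_ ?_ <;>
        · show _ = _
          match_scalars <;> field_simp <;> ring)

lemma twoByTwoEquiv_apply (p q r s : K) (h : p * s - q * r ≠ 0) (x : V × V) :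
    twoByTwoEquiv p q r s h x = (p • x.1 + q • x.2, r • x.1 + s • x.2) := rfl

/-- Transfer of a binary diagonal substitution to scaled copies of a quadratic form. -/
lemma binary_transfer (Q : QuadraticForm K V) (α β γ δ p q r s : K)
    (hdet : p * s - q * r ≠ 0)
    (h1 : α * (p * p) + β * (r * r) = γ)
    (h2 : α * (q * q) + β * (s * s) = δ)
    (h3 : α * (p * q) + β * (r * s) = 0) :
    ((γ • Q).prod (δ • Q)).Equivalent ((α • Q).prod (β • Q)) := by
  refine ⟨{ twoByTwoEquiv p q r s hdet with map_app' := fun x => ?_ }⟩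
  show ((α • Q).prod (β • Q)) (twoByTwoEquiv p q r s hdet x) = _
  obtain ⟨v, w⟩ := x
  rw [twoByTwoEquiv_apply]
  simp only [QuadraticMap.prod_apply, smul_apply']
  rw [QuadraticMap.map_add ⇑Q (p • v) (q • w), QuadraticMap.map_add ⇑Q (r • v) (s • w)]
  rw [Q.map_smul, Q.map_smul, Q.map_smul, Q.map_smul,
    polar_smul_left, polar_smul_right, polar_smul_left, polar_smul_right]
  simp only [smul_eq_mul]
  linear_combination Q v * h1 + Q w * h2 + polar ⇑Q v w * h3


variable (K) in
/-- Splitting of the index space of an `(n+1)`-fold Pfister form. -/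
def splitLequiv (n : ℕ) :
    ((Fin (n + 1) → Bool) → K) ≃ₗ[K] ((Fin n → Bool) → K) × ((Fin n → Bool) → K) where
  toFun f := (fun t => f (Fin.snoc t false), fun t => f (Fin.snoc t true))
  map_add' f g := rfl
  map_smul' c f := rfl
  invFun g := fun s => if s (Fin.last n) then g.2 (Fin.init s) else g.1 (Fin.init s)
  left_inv f := by
    funext s
    have hs : Fin.snoc (Fin.init s) (s (Fin.last n)) = s := Fin.snoc_init_self s
    dsimp only
    by_cases hb : s (Fin.last n) = true
    · rw [if_pos hb]
      conv_rhs => rw [← hs, hb]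
    · have hb2 : s (Fin.last n) = false := by simpa using hb
      rw [if_neg hb]
      conv_rhs => rw [← hs, hb2]
  right_inv g := by
    refine Prod.ext ?_ ?_ <;> funext t <;> simp [Fin.snoc_last, Fin.init_snoc]

lemma splitLequiv_apply (n : ℕ) (f : (Fin (n + 1) → Bool) → K) :
    splitLequiv K n f = (fun t => f (Fin.snoc t false), fun t => f (Fin.snoc t true)) := rfl

/-- `Fin.snoc` as an equivalence on Boolean tuples. -/
def snocEquiv (n : ℕ) : (Fin n → Bool) × Bool ≃ (Fin (n + 1) → Bool) where
  toFun p := Fin.snoc p.1 p.2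
  invFun s := (Fin.init s, s (Fin.last n))
  left_inv p := by simp [Fin.init_snoc, Fin.snoc_last]
  right_inv s := Fin.snoc_init_self s

lemma pfister_weight_snoc (n : ℕ) (a : Fin (n + 1) → K) (t : Fin n → Bool) (b : Bool) :
    (∏ i : Fin (n + 1), if (Fin.snoc t b : Fin (n + 1) → Bool) i then -a i else 1)
      = (if b then -a (Fin.last n) else 1)
        * ∏ i : Fin n, if t i then -(Fin.init a i) else 1 := by
  rw [Fin.prod_univ_castSucc]
  simp only [Fin.snoc_castSucc, Fin.snoc_last, Fin.init]
  ring

lemma pfister_sum_split (n : ℕ) (a : Fin (n + 1) → K) (f : (Fin (n + 1) → Bool) → K) :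
    pfisterForm K a f
      = pfisterForm K (Fin.init a) (fun t => f (Fin.snoc t false))
        + (-a (Fin.last n)) * pfisterForm K (Fin.init a) (fun t => f (Fin.snoc t true)) := by
  simp only [pfisterForm, QuadraticMap.weightedSumSquares_apply, smul_eq_mul]
  rw [← Equiv.sum_comp (snocEquiv n) (fun s => (∏ i, if s i then -a i else 1) * (f s * f s)),
    Fintype.sum_prod_type]
  simp only [snocEquiv, Equiv.coe_fn_mk, Fintype.sum_bool]
  rw [Finset.mul_sum, ← Finset.sum_add_distrib]
  refine Finset.sum_congr rfl fun t _ => ?_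
  erw [pfister_weight_snoc n a t true, pfister_weight_snoc n a t false]
  simp only [if_true, Bool.false_eq_true, if_false]
  ring

/-- The recursive splitting of a Pfister form. -/
lemma pfister_split (n : ℕ) (a : Fin (n + 1) → K) :
    (pfisterForm K a).Equivalent
      ((pfisterForm K (Fin.init a)).prod
        ((-a (Fin.last n)) • pfisterForm K (Fin.init a))) := by
  refine ⟨{ splitLequiv K n with map_app' := fun f => ?_ }⟩
  show ((pfisterForm K (Fin.init a)).prod
      ((-a (Fin.last n)) • pfisterForm K (Fin.init a))) (splitLequiv K n f) = _
  rw [splitLequiv_apply]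
  simp only [QuadraticMap.prod_apply, smul_apply']
  exact (pfister_sum_split n a f).symm


lemma hyp_apply (m : ℕ) (x : (Fin m → K) × (Fin m → K)) :
    hyperbolicForm K m x = ∑ i, x.1 i * x.2 i := by
  simp [hyperbolicForm, QuadraticMap.sum_apply, QuadraticMap.linMulLin_apply]

/-- Scaling a hyperbolic form by a nonzero constant gives an equivalent form. -/
lemma hyp_smul (m : ℕ) {c : K} (hc : c ≠ 0) :
    (c • hyperbolicForm K m).Equivalent (hyperbolicForm K m) := by
  refine ⟨{ (LinearEquiv.refl K (Fin m → K)).prodCongr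
      (LinearEquiv.smulOfNeZero K (Fin m → K) c hc) with map_app' := fun x => ?_ }⟩
  show hyperbolicForm K m (x.1, c • x.2) = (c • hyperbolicForm K m) x
  rw [hyp_apply, smul_apply', hyp_apply, Finset.mul_sum]
  exact Finset.sum_congr rfl fun i _ => by simp [Pi.smul_apply, smul_eq_mul]; ring

variable (K) in
/-- `Fin.append` as a linear equivalence. -/
def appendLequiv (m₁ m₂ : ℕ) :
    ((Fin m₁ → K) × (Fin m₂ → K)) ≃ₗ[K] (Fin (m₁ + m₂) → K) where
  toFun p := Fin.append p.1 p.2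
  map_add' p q := by
    funext i
    induction i using Fin.addCases <;>
      simp [Fin.append_left, Fin.append_right]
  map_smul' c p := by
    funext i
    induction i using Fin.addCases <;>
      simp [Fin.append_left, Fin.append_right]
  invFun f := (f ∘ Fin.castAdd m₂, f ∘ Fin.natAdd m₁)
  left_inv p := by
    refine Prod.ext ?_ ?_ <;> funext i <;>
      simp [Fin.append_left, Fin.append_right]
  right_inv f := by
    funext i
    induction i using Fin.addCases <;>
      simp [Fin.append_left, Fin.append_right]

/-- Orthogonal sums of hyperbolic forms are hyperbolic. -/
lemma hyp_add (m₁ m₂ : ℕ) :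
    ((hyperbolicForm K m₁).prod (hyperbolicForm K m₂)).Equivalent
      (hyperbolicForm K (m₁ + m₂)) := by
  refine ⟨{ (LinearEquiv.prodProdProdComm K (Fin m₁ → K) (Fin m₁ → K)
        (Fin m₂ → K) (Fin m₂ → K)).trans
      ((appendLequiv K m₁ m₂).prodCongr (appendLequiv K m₁ m₂)) with
      map_app' := fun x => ?_ }⟩
  obtain ⟨⟨x₁, y₁⟩, ⟨x₂, y₂⟩⟩ := x
  show hyperbolicForm K (m₁ + m₂) (Fin.append x₁ x₂, Fin.append y₁ y₂) = _
  rw [hyp_apply, Fin.sum_univ_add]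
  simp only [Fin.append_left, Fin.append_right, QuadraticMap.prod_apply, hyp_apply]


lemma pfister_zero_apply (a : Fin 0 → K) (f : (Fin 0 → Bool) → K) :
    pfisterForm K a f = f default * f default := by
  simp only [pfisterForm, QuadraticMap.weightedSumSquares_apply, smul_eq_mul]
  rw [Fintype.sum_subsingleton _ default]
  simp

variable (K) in
/-- The explicit equivalence realizing `⟨1, -1⟩ ≅ H`. -/
def baseLequiv (htwo : (2 : K) ≠ 0) :
    (((Fin 0 → Bool) → K) × ((Fin 0 → Bool) → K)) ≃ₗ[K]
      ((Fin 1 → K) × (Fin 1 → K)) where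
  toFun p := (fun _ => p.1 default + p.2 default, fun _ => p.1 default - p.2 default)
  map_add' p q := by
    refine Prod.ext ?_ ?_ <;> funext i <;> simp [Pi.add_apply] <;> ring
  map_smul' c p := by
    refine Prod.ext ?_ ?_ <;> funext i <;> simp [Pi.smul_apply, smul_eq_mul] <;> ring
  invFun p := (fun _ => (p.1 0 + p.2 0) / 2, fun _ => (p.1 0 - p.2 0) / 2)
  left_inv p := by
    refine Prod.ext ?_ ?_ <;> funext s <;> rw [Subsingleton.elim s default] <;>
      dsimp only <;> field_simp <;> ring
  right_inv p := by
    refine Prod.ext ?_ ?_ <;> funext i <;> rw [Subsingleton.elim i 0] <;>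
      dsimp only <;> field_simp <;> ring

/-- `Q ⊥ (-1) • Q` is hyperbolic for a Pfister form `Q`. -/
lemma pfister_neg_hyp (htwo : (2 : K) ≠ 0) :
    ∀ (n : ℕ) (a : Fin n → K), (∀ i, a i ≠ 0) →
      ((pfisterForm K a).prod ((-1 : K) • pfisterForm K a)).Equivalent
        (hyperbolicForm K (2 ^ n)) := by
  intro n
  induction n with
  | zero =>
    intro a _
    refine ⟨{ baseLequiv K htwo with map_app' := fun p => ?_ }⟩
    show hyperbolicForm K 1
        (fun _ => p.1 default + p.2 default, fun _ => p.1 default - p.2 default) = _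
    rw [hyp_apply]
    simp only [QuadraticMap.prod_apply, smul_apply', pfister_zero_apply,
      Fin.sum_univ_one]
    ring
  | succ n ih =>
    intro a ha
    have hsplit := pfister_split n a
    set ψ := pfisterForm K (Fin.init a) with hψ
    set A := -a (Fin.last n) with hAdef
    have hA : A ≠ 0 := neg_ne_zero.mpr (ha _)
    have hind := ih (Fin.init a) (fun i => ha _)
    -- Step 1: split both summands
    have h1 : ((pfisterForm K a).prod ((-1 : K) • pfisterForm K a)).Equivalent
        ((ψ.prod (A • ψ)).prod (((-1 : K) • ψ).prod ((-1 : K) • (A • ψ)))) := by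
      refine hsplit.prod ?_
      have := equivalent_smul (-1 : K) hsplit
      rwa [smul_prod] at this
    -- Step 2: rearrange the four factors
    have h2 : ((ψ.prod (A • ψ)).prod (((-1 : K) • ψ).prod ((-1 : K) • (A • ψ)))).Equivalent
        ((ψ.prod ((-1 : K) • ψ)).prod ((A • ψ).prod ((-1 : K) • (A • ψ)))) :=
      ⟨QuadraticMap.IsometryEquiv.prodProdProdComm _ _ _ _⟩
    -- Step 3: the second pair is `A • (ψ ⊥ -ψ)`
    have key : ((A • ψ).prod ((-1 : K) • (A • ψ))).Equivalent (hyperbolicForm K (2 ^ n)) := by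
      have heq : (A • ψ).prod ((-1 : K) • (A • ψ)) = A • (ψ.prod ((-1 : K) • ψ)) := by
        rw [smul_prod, smul_smul, smul_smul, mul_comm]
      rw [heq]
      exact (equivalent_smul A hind).trans (hyp_smul _ hA)
    have h3 : ((ψ.prod ((-1 : K) • ψ)).prod ((A • ψ).prod ((-1 : K) • (A • ψ)))).Equivalent
        (hyperbolicForm K (2 ^ n + 2 ^ n)) :=
      (hind.prod key).trans (hyp_add _ _)
    have hpow : 2 ^ n + 2 ^ n = 2 ^ (n + 1) := by ring
    rw [hpow] at h3
    exact (h1.trans h2).trans h3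


/-- Pfister forms are round: every nonzero represented value is a similarity factor. -/
lemma pfister_round :
    ∀ (n : ℕ) (a : Fin n → K) (x : (Fin n → Bool) → K), pfisterForm K a x ≠ 0 →
      ((pfisterForm K a x) • pfisterForm K a).Equivalent (pfisterForm K a) := by
  intro n
  induction n with
  | zero =>
    intro a x hx
    rw [pfister_zero_apply] at hx ⊢
    have h0 : x default ≠ 0 := fun h => hx (by rw [h, zero_mul])
    exact equivalent_sq_smul h0 (pfisterForm K a)
  | succ n ih =>
    intro a x hx
    obtain ⟨E⟩ := pfister_split n a
    set ψ := pfisterForm K (Fin.init a) with hψ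
    set A := -a (Fin.last n) with hAdef
    set c := pfisterForm K a x with hc
    set b := ψ (E x).1 with hb
    set d := ψ (E x).2 with hd
    have hval : b + A * d = c := by
      have h := E.map_app x
      rw [QuadraticMap.prod_apply, smul_apply'] at h
      exact h
    have hEq : (pfisterForm K a).Equivalent (ψ.prod (A • ψ)) := ⟨E⟩
    suffices h : ((c • ψ).prod ((c * A) • ψ)).Equivalent (ψ.prod (A • ψ)) by
      have h' : (c • pfisterForm K a).Equivalent ((c • ψ).prod ((c * A) • ψ)) := by
        have := equivalent_smul c hEq
        rwa [smul_prod, smul_smul] at this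
      exact (h'.trans h).trans hEq.symm
    by_cases hb0 : b = 0
    · -- c = A * d
      have hcAd : c = A * d := by rw [← hval, hb0, zero_add]
      have hA0 : A ≠ 0 := fun h => hx (by rw [← hval, hb0, h, zero_add, zero_mul])
      have hd0 : d ≠ 0 := fun h => hx (by rw [← hval, hb0, h, zero_add, mul_zero])
      have hfst : (c • ψ).Equivalent (A • ψ) := by
        rw [hcAd, ← smul_smul]
        exact equivalent_smul A (ih _ _ hd0)
      have hsnd : ((c * A) • ψ).Equivalent ψ := by
        have hcA : c * A = (A * A) * d := by rw [hcAd]; ring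
        rw [hcA, ← smul_smul]
        exact (equivalent_smul (A * A) (ih _ _ hd0)).trans (equivalent_sq_smul hA0 ψ)
      exact ((hfst.prod hsnd).trans ⟨QuadraticMap.IsometryEquiv.prodComm _ _⟩)
    · by_cases hd0 : d = 0
      · -- c = b
        have hcb : c = b := by rw [← hval, hd0, mul_zero, add_zero]
        have hfst : (c • ψ).Equivalent ψ := by rw [hcb]; exact ih _ _ hb0
        have hsnd : ((c * A) • ψ).Equivalent (A • ψ) := by
          rw [mul_comm, ← smul_smul]
          exact equivalent_smul A hfst
        exact hfst.prod hsnd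
      · -- general case
        have hc0 : c ≠ 0 := hx
        have hbψ : (b • ψ).Equivalent ψ := ih _ _ hb0
        have hdψ : (d • ψ).Equivalent ψ := ih _ _ hd0
        -- ψ ⊥ Aψ ≅ bψ ⊥ (A*d)ψ
        have step1 : (ψ.prod (A • ψ)).Equivalent ((b • ψ).prod ((A * d) • ψ)) := by
          refine hbψ.symm.prod ?_
          rw [show (A * d) • ψ = A • (d • ψ) from (smul_smul _ _ _).symm]
          exact (equivalent_smul A hdψ).symm
        -- binary substitution:  (c, A*b*d*c) ↦ (b, A*d)
        have step2 : ((c • ψ).prod ((A * b * d * c) • ψ)).Equivalent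
            ((b • ψ).prod ((A * d) • ψ)) := by
          refine binary_transfer ψ b (A * d) c (A * b * d * c) 1 (A * d) 1 (-b) ?_ ?_ ?_ ?_
          · -- determinant
            intro h
            apply hc0
            linear_combination -h - hval
          · linear_combination hval
          · linear_combination (A * b * d) * hval
          · ring
        -- (A*b*d*c) • ψ ≅ (c*A) • ψ
        have step3 : ((A * b * d * c) • ψ).Equivalent ((c * A) • ψ) := by
          have heq : A * b * d * c = (c * A) * (b * d) := by ring
          rw [heq, show ((c * A) * (b * d)) • ψ = (c * A) • ((b * d) • ψ) from
            (smul_smul _ _ _).symm]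
          refine equivalent_smul (c * A) ?_
          rw [show (b * d) • ψ = b • (d • ψ) from (smul_smul _ _ _).symm]
          exact (equivalent_smul b hdψ).trans hbψ
        exact (((QuadraticMap.Equivalent.refl (c • ψ)).prod step3.symm).trans step2).trans
          step1.symm


/-- Main induction: an isotropic Pfister form is hyperbolic. -/
lemma pfister_main (htwo : (2 : K) ≠ 0) :
    ∀ (n : ℕ) (a : Fin n → K), (∀ i, a i ≠ 0) →
      ¬ (pfisterForm K a).Anisotropic →
      ∃ m, (pfisterForm K a).Equivalent (hyperbolicForm K m) := by
  intro n
  induction n with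
  | zero =>
    intro a _ hiso
    exfalso
    apply hiso
    intro x hx
    rw [pfister_zero_apply] at hx
    have h0 := mul_self_eq_zero.mp hx
    funext s
    rw [Subsingleton.elim s default]
    exact h0
  | succ n ih =>
    intro a ha hiso
    obtain ⟨E⟩ := pfister_split n a
    set ψ := pfisterForm K (Fin.init a) with hψ
    set A := -a (Fin.last n) with hAdef
    have hA : A ≠ 0 := neg_ne_zero.mpr (ha _)
    have hEq : (pfisterForm K a).Equivalent (ψ.prod (A • ψ)) := ⟨E⟩
    obtain ⟨x, hx0, hxne⟩ : ∃ x, pfisterForm K a x = 0 ∧ x ≠ 0 := by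
      by_contra h
      push_neg at h
      exact hiso fun y hy => by
        by_contra hyne
        exact hyne (h y hy)
    set v := (E x).1 with hv
    set w := (E x).2 with hw
    have hval : ψ v + A * ψ w = 0 := by
      have h := E.map_app x
      rw [QuadraticMap.prod_apply, smul_apply'] at h
      rw [← hv, ← hw] at h
      rw [h, hx0]
    have hvw : ¬(v = 0 ∧ w = 0) := by
      rintro ⟨h1, h2⟩
      apply hxne
      have hE0 : E x = 0 := by
        have : E x = (v, w) := rfl
        rw [this, h1, h2]
        rfl
      have h3 : E.toLinearEquiv x = 0 := by
        rw [← QuadraticMap.IsometryEquiv.coe_toLinearEquiv] at hE0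
        exact hE0
      have := congrArg E.toLinearEquiv.symm h3
      rwa [E.toLinearEquiv.symm_apply_apply, map_zero] at this
    by_cases hbv : ψ v = 0
    · -- ψ itself is isotropic
      have hw0 : ψ w = 0 := by
        have : A * ψ w = 0 := by rwa [hbv, zero_add] at hval
        exact (mul_eq_zero.mp this).resolve_left hA
      have hψiso : ¬ ψ.Anisotropic := fun han => hvw ⟨han v hbv, han w hw0⟩
      obtain ⟨m, hm⟩ := ih (Fin.init a) (fun i => ha _) hψiso
      refine ⟨m + m, ?_⟩
      have h2 : (A • ψ).Equivalent (hyperbolicForm K m) :=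
        (equivalent_smul A hm).trans (hyp_smul m hA)
      exact (hEq.trans (hm.prod h2)).trans (hyp_add m m)
    · -- ψ v ≠ 0, hence ψ w ≠ 0, and A • ψ ≅ (-1) • ψ
      have hw0 : ψ w ≠ 0 := by
        intro h
        apply hbv
        rw [h, mul_zero, add_zero] at hval
        exact hval
      set b := ψ v with hbdef
      set d := ψ w with hddef
      have hAd : A * d = -b := by linear_combination hval
      have hAs : A = (-1 : K) * ((b * d) * (d⁻¹ * d⁻¹)) := by
        field_simp
        linear_combination hAd
      have h1 : (A • ψ).Equivalent ((-1 : K) • ψ) := by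
        rw [hAs, show ((-1 : K) * ((b * d) * (d⁻¹ * d⁻¹))) • ψ
          = (-1 : K) • (((b * d) * (d⁻¹ * d⁻¹)) • ψ) from (smul_smul _ _ _).symm]
        refine equivalent_smul _ ?_
        rw [show ((b * d) * (d⁻¹ * d⁻¹)) • ψ = (b * d) • ((d⁻¹ * d⁻¹) • ψ) from
          (smul_smul _ _ _).symm]
        have hsq : ((d⁻¹ * d⁻¹) • ψ).Equivalent ψ := equivalent_sq_smul (inv_ne_zero hw0) ψ
        refine (equivalent_smul (b * d) hsq).trans ?_
        rw [show (b * d) • ψ = b • (d • ψ) from (smul_smul _ _ _).symm]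
        exact (equivalent_smul b (pfister_round n (Fin.init a) w hw0)).trans
          (pfister_round n (Fin.init a) v hbv)
      refine ⟨2 ^ n, ?_⟩
      exact (hEq.trans ((QuadraticMap.Equivalent.refl ψ).prod h1)).trans
        (pfister_neg_hyp htwo n (Fin.init a) (fun i => ha _))

end PfisterAux

/-- Let `K` be a field with `char K ≠ 2`.  Every isotropic Pfister form over `K` is
hyperbolic. -/
theorem pfister_isotropic_isHyperbolic (K : Type*) [Field K] (hchar : ringChar K ≠ 2)
    (n : ℕ) (a : Fin n → K) (ha : ∀ i, a i ≠ 0)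
    (hiso : ¬ (pfisterForm K a).Anisotropic) :
    (pfisterForm K a).IsHyperbolic := by
  have htwo : (2 : K) ≠ 0 := Ring.two_ne_zero hchar
  obtain ⟨m, hm⟩ := PfisterAux.pfister_main htwo n a ha hiso
  exact ⟨m, hm⟩
end

section
/- Let A be a discrete valuation ring with uniformizer π, residue field κ of characteristic ≠ 2, and fraction field K with -1 a square in K. For units a₁, …, a_i ∈ A* and 0 ≤ m ≤ i, the residue of the Milnor symbol {πa₁, …, πa_m, a_{m+1}, …, a_i} mod 2 under the tame symbol/residue map ∂_A : K^M_i(K)/2 → K^M_{i-1}(κ)/2 equals (Σ_{j=1}^m {ā₁, …, \hat{ā_j}, …, ā_m}) · {ā_{m+1}, …, ā_i}, with the conventions that the sum is 1 (the empty symbol) if m = 1 and 0 if m = 0. -/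
open IsLocalRing

/-!
Each slot of a symbol is additive, so `{π a₁, …, π a_m}` expands as the product of the sums
`{π} + {aⱼ}`. Since `{π, π} = {π, -1} = 0` (`-1` being a square), only the terms with at most one
factor `{π}` survive: `{π a₁, …, π a_m} = {a₁, …, a_m} + ∑ⱼ {π, a₁, …, \hat{aⱼ}, …, a_m}`.
The residue kills the first term and strips `π` from the others.
-/

theorem isSquare_units_of_isSquare_val {K : Type*} [GroupWithZero K] {u : Kˣ}
    (h : IsSquare (u : K)) : IsSquare u := by
  obtain ⟨s, hs⟩ := h
  have hs0 : s ≠ 0 := by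
    rintro rfl
    simp at hs
  exact ⟨Units.mk0 s hs0, Units.ext (by simpa using hs)⟩

namespace MilnorSymbol

variable {G M : Type*} [CommRing M] {symb : List G → M}

theorem cons_eq_mul (happ : ∀ L₁ L₂, symb (L₁ ++ L₂) = symb L₁ * symb L₂)
    (c : G) (L : List G) : symb (c :: L) = symb [c] * symb L :=
  happ [c] L

theorem single_eq_zero_of_isSquare [Mul G]
    (hadd : ∀ a b : G, symb [a * b] = symb [a] + symb [b]) (htwo : ∀ x : M, x + x = 0)
    {a : G} (ha : IsSquare a) : symb [a] = 0 := by
  obtain ⟨s, rfl⟩ := ha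
  rw [hadd, htwo]

theorem single_mul_self_eq_zero [MulOneClass G] [HasDistribNeg G]
    (happ : ∀ L₁ L₂, symb (L₁ ++ L₂) = symb L₁ * symb L₂)
    (hadd : ∀ a b : G, symb [a * b] = symb [a] + symb [b])
    (hself : ∀ a : G, symb [a, -a] = 0) (hneg : symb [-1] = 0) (a : G) :
    symb [a] * symb [a] = 0 := by
  have h := hself a
  rwa [cons_eq_mul happ, ← neg_one_mul, hadd, hneg, zero_add] at h

theorem map_mul_left [Mul G] (happ : ∀ L₁ L₂, symb (L₁ ++ L₂) = symb L₁ * symb L₂)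
    (hadd : ∀ a b : G, symb [a * b] = symb [a] + symb [b])
    {p : G} (hp : symb [p] * symb [p] = 0) (L : List G) :
    symb (L.map (p * ·)) =
      symb L + symb [p] * ∑ j ∈ Finset.range L.length, symb (L.eraseIdx j) := by
  induction L with
  | nil => simp
  | cons c L ih =>
    have hsum : ∑ j ∈ Finset.range L.length, symb ((c :: L).eraseIdx (j + 1)) =
        symb [c] * ∑ j ∈ Finset.range L.length, symb (L.eraseIdx j) := by
      rw [Finset.mul_sum]
      exact Finset.sum_congr rfl fun j _ => cons_eq_mul happ c _
    rw [List.map_cons, cons_eq_mul happ, hadd, ih, List.length_cons, Finset.sum_range_succ', hsum,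
      List.eraseIdx_cons_zero, cons_eq_mul happ c L]
    linear_combination (∑ j ∈ Finset.range L.length, symb (L.eraseIdx j)) * hp

end MilnorSymbol

theorem MilnorSymbol.residue_map_mul_uniformizer {U G H MK Mκ : Type*} [Mul G]
    [CommRing MK] [CommRing Mκ] {symbK : List G → MK} {symbκ : List H → Mκ} {res : MK →+ Mκ}
    {uK : U → G} {uκ : U → H} {πK : G}
    (happK : ∀ L₁ L₂, symbK (L₁ ++ L₂) = symbK L₁ * symbK L₂)
    (happκ : ∀ L₁ L₂, symbκ (L₁ ++ L₂) = symbκ L₁ * symbκ L₂)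
    (haddK : ∀ a b : G, symbK [a * b] = symbK [a] + symbK [b])
    (hπK : symbK [πK] * symbK [πK] = 0)
    (hres₁ : ∀ L : List U, res (symbK (πK :: L.map uK)) = symbκ (L.map uκ))
    (hres₂ : ∀ L : List U, res (symbK (L.map uK)) = 0) (L N : List U) :
    res (symbK (L.map (fun u => πK * uK u) ++ N.map uK)) =
      ∑ j ∈ Finset.range L.length, symbκ ((L.map uκ).eraseIdx j) * symbκ (N.map uκ) := by
  have hterm : ∀ j, res (symbK [πK] * (symbK ((L.map uK).eraseIdx j) * symbK (N.map uK))) =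
      symbκ ((L.map uκ).eraseIdx j) * symbκ (N.map uκ) := fun j => by
    rw [← happK, List.eraseIdx_map, ← List.map_append, ← cons_eq_mul happK, hres₁,
      List.map_append, happκ, List.eraseIdx_map]
  have hmap : L.map (fun u => πK * uK u) = (L.map uK).map (πK * ·) := (List.map_map ..).symm
  rw [hmap, happK, map_mul_left happK haddK hπK, add_mul, map_add, ← happK, ← List.map_append,
    hres₂, zero_add, mul_assoc, Finset.sum_mul, Finset.mul_sum, map_sum, List.length_map]
  exact Finset.sum_congr rfl fun j _ => hterm j

theorem residue_of_milnor_symbol_general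
    (A : Type*) [CommRing A] [IsDomain A] [IsDiscreteValuationRing A]
    (hK : IsSquare (-1 : FractionRing A))
    (MK Mκ : Type*) [CommRing MK] [CommRing Mκ]
    (symbK : List (FractionRing A)ˣ → MK)
    (symbκ : List (ResidueField A)ˣ → Mκ)
    (happK : ∀ L₁ L₂, symbK (L₁ ++ L₂) = symbK L₁ * symbK L₂)
    (happκ : ∀ L₁ L₂, symbκ (L₁ ++ L₂) = symbκ L₁ * symbκ L₂)
    (htwoK : ∀ x : MK, x + x = 0)
    (haddK : ∀ a b : (FractionRing A)ˣ, symbK [a * b] = symbK [a] + symbK [b])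
    (hselfK : ∀ a : (FractionRing A)ˣ, symbK [a, -a] = 0)
    (uK : Aˣ →* (FractionRing A)ˣ)
    (uκ : Aˣ →* (ResidueField A)ˣ)
    (πK : (FractionRing A)ˣ)
    (res : MK →+ Mκ)
    (hres₁ : ∀ L : List Aˣ, res (symbK (πK :: L.map uK)) = symbκ (L.map uκ))
    (hres₂ : ∀ L : List Aˣ, res (symbK (L.map uK)) = 0) :
    ∀ (m l : ℕ) (a : Fin m → Aˣ) (b : Fin l → Aˣ),
      res (symbK (List.ofFn (fun j => πK * uK (a j)) ++ List.ofFn (fun j => uK (b j)))) =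
      (∑ j : Fin m, symbκ ((List.ofFn fun j' => uκ (a j')).eraseIdx j)) *
        symbκ (List.ofFn fun j => uκ (b j)) := by
  intro m l a b
  have hneg : symbK [-1] = 0 :=
    MilnorSymbol.single_eq_zero_of_isSquare haddK htwoK
      (isSquare_units_of_isSquare_val (by simpa using hK))
  have hπK := MilnorSymbol.single_mul_self_eq_zero happK haddK hselfK hneg πK
  have h := MilnorSymbol.residue_map_mul_uniformizer happK happκ haddK hπK hres₁ hres₂
    (List.ofFn a) (List.ofFn b)
  simp only [List.map_ofFn, List.length_ofFn, ← Fin.sum_univ_eq_sum_range] at h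
  rw [Finset.sum_mul]
  exact h

/-- **Residue formula for mod-2 Milnor symbols (Lemma 6 of the paper).**
Let `A` be a discrete valuation ring with uniformizer `π`, residue field `κ` of
characteristic `≠ 2`, and fraction field `K` in which `-1` is a square.  We axiomatize the
mod-2 Milnor K-rings of `K` and `κ` (as commutative rings `MK`, `Mκ` of exponent `2`, with
symbols given on lists of units, multiplicative under concatenation and additive in each
slot, satisfying `{a, -a} = 0`) and the residue (tame symbol) map `∂ : MK →+ Mκ`
(sending `{π, u₂, …}` to `{ū₂, …}` and symbols of units to `0`).  Then for units
`a₁, …, a_m, b₁, …, b_l ∈ A*`,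
`∂ {π a₁, …, π a_m, b₁, …, b_l} = (∑_{j=1}^m {ā₁, …, \hat{ā_j}, …, ā_m}) ⬝ {b̄₁, …, b̄_l}`,
with the conventions that the sum is the empty symbol (the identity) if `m = 1` and `0` if
`m = 0`. -/
theorem residue_of_milnor_symbol
    (A : Type*) [CommRing A] [IsDomain A] [IsDiscreteValuationRing A]
    (hκ : ringChar (ResidueField A) ≠ 2)
    (hK : IsSquare (-1 : FractionRing A))
    (π : A) (hπ : Irreducible π)
    (MK Mκ : Type*) [CommRing MK] [CommRing Mκ]
    (symbK : List (FractionRing A)ˣ → MK)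
    (symbκ : List (ResidueField A)ˣ → Mκ)
    (hnilK : symbK [] = 1) (hnilκ : symbκ [] = 1)
    (happK : ∀ L₁ L₂, symbK (L₁ ++ L₂) = symbK L₁ * symbK L₂)
    (happκ : ∀ L₁ L₂, symbκ (L₁ ++ L₂) = symbκ L₁ * symbκ L₂)
    (htwoK : ∀ x : MK, x + x = 0) (htwoκ : ∀ x : Mκ, x + x = 0)
    (haddK : ∀ a b : (FractionRing A)ˣ, symbK [a * b] = symbK [a] + symbK [b])
    (haddκ : ∀ a b : (ResidueField A)ˣ, symbκ [a * b] = symbκ [a] + symbκ [b])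
    (hselfK : ∀ a : (FractionRing A)ˣ, symbK [a, -a] = 0)
    (uK : Aˣ →* (FractionRing A)ˣ)
    (huK : ∀ u : Aˣ, (uK u : FractionRing A) = algebraMap A (FractionRing A) u)
    (uκ : Aˣ →* (ResidueField A)ˣ)
    (huκ : ∀ u : Aˣ, (uκ u : ResidueField A) = residue A u)
    (πK : (FractionRing A)ˣ)
    (hπK : (πK : FractionRing A) = algebraMap A (FractionRing A) π)
    (res : MK →+ Mκ)
    (hres₁ : ∀ L : List Aˣ, res (symbK (πK :: L.map uK)) = symbκ (L.map uκ))
    (hres₂ : ∀ L : List Aˣ, res (symbK (L.map uK)) = 0) :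
    ∀ (m l : ℕ) (a : Fin m → Aˣ) (b : Fin l → Aˣ),
      res (symbK (List.ofFn (fun j => πK * uK (a j)) ++ List.ofFn (fun j => uK (b j)))) =
      (∑ j : Fin m, symbκ ((List.ofFn fun j' => uκ (a j')).eraseIdx j)) *
        symbκ (List.ofFn fun j => uκ (b j)) :=
  residue_of_milnor_symbol_general A hK MK Mκ symbK symbκ happK happκ htwoK haddK hselfK uK uκ πK
    res hres₁ hres₂
end

section
/- In the field K = k(x₁, …, x_n) over a field k with char k ≠ 2 in which -1 is a square, the symbol α = {x₁, x₂, …, x_n} in K^M_n(K)/2 (mod 2 Milnor K-theory) is nonzero. -/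
/-! Mod 2 Milnor K-theory `K^M_n(K)/2`, presented as the `ZMod 2`-vector space generated by
symbols `{a₁, …, aₙ}` (for `aᵢ ∈ Kˣ`) subject to multilinearity and the Steinberg relation. -/

/-- Generators of the relations submodule for mod 2 Milnor K-theory. -/
def milnorRels (K : Type*) [Field K] (n : ℕ) : Set ((Fin n → Kˣ) →₀ ZMod 2) :=
  {x | (∃ (v : Fin n → Kˣ) (i : Fin n) (u w : Kˣ),
          x = Finsupp.single (Function.update v i (u * w)) 1
              - Finsupp.single (Function.update v i u) 1
              - Finsupp.single (Function.update v i w) 1) ∨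
       (∃ (v : Fin n → Kˣ) (i j : Fin n), i ≠ j ∧ (v i : K) + (v j : K) = 1 ∧
          x = Finsupp.single v 1)}

/-- Mod 2 Milnor K-theory `K^M_n(K)/2`. -/
def MilnorMod2 (K : Type*) [Field K] (n : ℕ) : Type _ :=
  ((Fin n → Kˣ) →₀ ZMod 2) ⧸ Submodule.span (ZMod 2) (milnorRels K n)

noncomputable instance (K : Type*) [Field K] (n : ℕ) : AddCommGroup (MilnorMod2 K n) :=
  inferInstanceAs (AddCommGroup (((Fin n → Kˣ) →₀ ZMod 2) ⧸
    Submodule.span (ZMod 2) (milnorRels K n)))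

/-- The Milnor symbol `{a₁, …, aₙ}` in mod 2 Milnor K-theory. -/
noncomputable def milnorSymbol {K : Type*} [Field K] {n : ℕ} (v : Fin n → Kˣ) :
    MilnorMod2 K n :=
  Submodule.Quotient.mk (Finsupp.single v 1)


open MvPolynomial

set_option maxHeartbeats 1000000
set_option synthInstance.maxHeartbeats 400000

section Valuation

variable {k : Type*} [Field k] {n : ℕ}

/-- embed exponents into lex ℤ-Finsupps -/
noncomputable def embM (s : Fin n →₀ ℕ) : Lex (Fin n →₀ ℤ) :=
  toLex (s.mapRange (Nat.cast) (by simp))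

lemma embM_apply (s : Fin n →₀ ℕ) (j : Fin n) : ofLex (embM s) j = (s j : ℤ) := rfl

lemma embM_add (s t : Fin n →₀ ℕ) : embM (s + t) = embM s + embM t := by
  refine congrArg toLex ?_
  ext j
  simp [Finsupp.mapRange_apply, Finsupp.add_apply]
  rfl

lemma embM_inj : Function.Injective (embM (n := n)) := by
  intro s t h
  ext i
  have h2 : ((s i : ℤ)) = (t i : ℤ) := by
    have h3 := congrArg (fun x : Lex (Fin n →₀ ℤ) => ofLex x i) h
    simpa [embM_apply] using h3
  exact_mod_cast h2

open Classical in
/-- min lex exponent of a polynomial (junk value 0 at 0) -/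
noncomputable def WM (p : MvPolynomial (Fin n) k) : Lex (Fin n →₀ ℤ) :=
  if h : p = 0 then 0 else
    (p.support.image embM).min' ((MvPolynomial.support_nonempty.2 h).image _)

lemma WM_le {p : MvPolynomial (Fin n) k} (hp : p ≠ 0) {d : Fin n →₀ ℕ}
    (hd : d ∈ p.support) : WM p ≤ embM d := by
  unfold WM
  rw [dif_neg hp]
  exact Finset.min'_le _ _ (Finset.mem_image_of_mem _ hd)

lemma WM_exists {p : MvPolynomial (Fin n) k} (hp : p ≠ 0) :
    ∃ d ∈ p.support, WM p = embM d := by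
  unfold WM
  rw [dif_neg hp]
  have := Finset.min'_mem (p.support.image embM)
    ((MvPolynomial.support_nonempty.2 hp).image _)
  obtain ⟨d, hd, hd'⟩ := Finset.mem_image.mp this
  exact ⟨d, hd, hd'.symm⟩

lemma WM_mul {p q : MvPolynomial (Fin n) k} (hp : p ≠ 0) (hq : q ≠ 0) :
    WM (p * q) = WM p + WM q := by
  obtain ⟨sp, hsp, hWp⟩ := WM_exists hp
  obtain ⟨sq, hsq, hWq⟩ := WM_exists hq
  have hpq : p * q ≠ 0 := mul_ne_zero hp hq
  have hcoeff : (p * q).coeff (sp + sq) = p.coeff sp * q.coeff sq := by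
    rw [MvPolynomial.coeff_mul]
    apply Finset.sum_eq_single (sp, sq)
    · rintro ⟨a, c⟩ hmem hne
      rw [Finset.HasAntidiagonal.mem_antidiagonal] at hmem
      by_contra hzero
      have ha : a ∈ p.support := by
        rw [MvPolynomial.mem_support_iff]; intro h0; apply hzero; simp [h0]
      have hc : c ∈ q.support := by
        rw [MvPolynomial.mem_support_iff]; intro h0; apply hzero; simp [h0]
      have h1 : embM sp ≤ embM a := by rw [← hWp]; exact WM_le hp ha
      have h2 : embM sq ≤ embM c := by rw [← hWq]; exact WM_le hq hc
      have h3 : embM a + embM c = embM sp + embM sq := by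
        rw [← embM_add, ← embM_add, hmem]
      have h4 : embM a = embM sp := by
        by_contra hne'
        have hlt : embM sp < embM a := lt_of_le_of_ne h1 (Ne.symm hne')
        have : embM sp + embM sq < embM a + embM c := add_lt_add_of_lt_of_le hlt h2
        rw [h3] at this; exact lt_irrefl _ this
      have ha' : a = sp := embM_inj h4
      have hc' : c = sq := by subst ha'; exact add_left_cancel hmem
      exact hne (by rw [ha', hc'])
    · intro h
      exfalso; apply h
      rw [Finset.HasAntidiagonal.mem_antidiagonal]
  have hne : (p * q).coeff (sp + sq) ≠ 0 := by
    rw [hcoeff]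
    exact mul_ne_zero (MvPolynomial.mem_support_iff.mp hsp)
      (MvPolynomial.mem_support_iff.mp hsq)
  apply le_antisymm
  · calc WM (p * q) ≤ embM (sp + sq) := WM_le hpq (MvPolynomial.mem_support_iff.mpr hne)
    _ = WM p + WM q := by rw [embM_add, hWp, hWq]
  · obtain ⟨d, hd, hWd⟩ := WM_exists hpq
    have hcd : (p * q).coeff d ≠ 0 := MvPolynomial.mem_support_iff.mp hd
    rw [MvPolynomial.coeff_mul] at hcd
    obtain ⟨⟨a, c⟩, hmem, hne'⟩ := Finset.exists_ne_zero_of_sum_ne_zero hcd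
    rw [Finset.HasAntidiagonal.mem_antidiagonal] at hmem
    have ha : a ∈ p.support := by
      rw [MvPolynomial.mem_support_iff]; intro h0; apply hne'; simp [h0]
    have hc : c ∈ q.support := by
      rw [MvPolynomial.mem_support_iff]; intro h0; apply hne'; simp [h0]
    calc WM p + WM q ≤ embM a + embM c := add_le_add (WM_le hp ha) (WM_le hq hc)
    _ = embM d := by rw [← embM_add, hmem]
    _ = WM (p * q) := hWd.symm

lemma WM_add_ge {p q : MvPolynomial (Fin n) k} (hp : p ≠ 0) (hq : q ≠ 0)
    (hpq : p + q ≠ 0) : min (WM p) (WM q) ≤ WM (p + q) := by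
  obtain ⟨d, hd, hWd⟩ := WM_exists hpq
  rw [hWd]
  have hmem := MvPolynomial.support_add hd
  rcases Finset.mem_union.mp hmem with h | h
  · exact le_trans (min_le_left _ _) (WM_le hp h)
  · exact le_trans (min_le_right _ _) (WM_le hq h)

lemma WM_one : WM (1 : MvPolynomial (Fin n) k) = 0 := by
  have h := WM_mul (k := k) (n := n) one_ne_zero one_ne_zero
  rw [one_mul] at h
  exact (left_eq_add.mp h)

lemma WM_X (i : Fin n) : WM (X i : MvPolynomial (Fin n) k) = embM (Finsupp.single i 1) := by
  obtain ⟨d, hd, hWd⟩ := WM_exists (MvPolynomial.X_ne_zero (R := k) i)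
  rw [MvPolynomial.support_X, Finset.mem_singleton] at hd
  rw [hWd, hd]

local notation "R" => MvPolynomial (Fin n) k
local notation "KK" => FractionRing (MvPolynomial (Fin n) k)

/-- the lex valuation on the fraction field -/
noncomputable def VM (a : FractionRing (MvPolynomial (Fin n) k)) : Lex (Fin n →₀ ℤ) :=
  WM (IsFractionRing.num (MvPolynomial (Fin n) k) a) -
    WM ((IsFractionRing.den (MvPolynomial (Fin n) k) a : MvPolynomial (Fin n) k))

lemma den_ne_zero (a : KK) : ((IsFractionRing.den R a : R)) ≠ 0 :=
  nonZeroDivisors.coe_ne_zero _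

lemma num_ne_zero {a : KK} (ha : a ≠ 0) : IsFractionRing.num R a ≠ 0 :=
  fun h => ha (IsFractionRing.eq_zero_of_num_eq_zero h)

lemma a_mul_den (a : KK) :
    a * algebraMap R KK (IsFractionRing.den R a : R) =
      algebraMap R KK (IsFractionRing.num R a) := by
  have h := IsLocalization.mk'_spec KK (IsFractionRing.num R a) (IsFractionRing.den R a)
  rw [IsFractionRing.mk'_num_den R a] at h
  exact h

lemma VM_eq {a : KK} (ha : a ≠ 0) {p q : R} (hq : q ≠ 0)
    (h : a * algebraMap R KK q = algebraMap R KK p) : VM a = WM p - WM q := by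
  have hp : p ≠ 0 := by
    intro h0
    rw [h0, map_zero] at h
    rcases mul_eq_zero.mp h with h' | h'
    · exact ha h'
    · exact (IsFractionRing.to_map_ne_zero_of_mem_nonZeroDivisors
        (mem_nonZeroDivisors_of_ne_zero hq)) h'
  have key : p * (IsFractionRing.den R a : R) = IsFractionRing.num R a * q := by
    apply IsFractionRing.injective R KK
    rw [map_mul, map_mul, ← a_mul_den a, ← h]
    ring
  have hW : WM p + WM ((IsFractionRing.den R a : R)) =
      WM (IsFractionRing.num R a) + WM q := by
    rw [← WM_mul hp (den_ne_zero a), ← WM_mul (num_ne_zero ha) hq, key]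
  rw [VM, sub_eq_sub_iff_add_eq_add]
  exact hW.symm

lemma VM_mul {a b : KK} (ha : a ≠ 0) (hb : b ≠ 0) : VM (a * b) = VM a + VM b := by
  have h := VM_eq (mul_ne_zero ha hb)
    (p := IsFractionRing.num R a * IsFractionRing.num R b)
    (q := (IsFractionRing.den R a : R) * (IsFractionRing.den R b : R))
    (mul_ne_zero (den_ne_zero a) (den_ne_zero b)) ?_
  · rw [h, WM_mul (num_ne_zero ha) (num_ne_zero hb),
      WM_mul (den_ne_zero a) (den_ne_zero b), VM, VM]
    abel
  · rw [map_mul, map_mul, ← a_mul_den a, ← a_mul_den b]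
    ring

lemma VM_one : VM (1 : KK) = 0 := by
  have h := VM_eq (a := (1 : KK)) one_ne_zero (p := (1 : R)) (q := (1 : R)) one_ne_zero
    (by simp)
  rw [h, sub_self]

lemma VM_neg {a : KK} (ha : a ≠ 0) : VM (-a) = VM a := by
  have hm1 : VM ((-1 : KK)) = 0 := by
    have h := VM_mul (a := (-1 : KK)) (b := (-1 : KK)) (by norm_num) (by norm_num)
    rw [neg_mul_neg, one_mul, VM_one] at h
    have hs : VM ((-1:KK)) + VM ((-1:KK)) = 0 := h.symm
    rcases lt_trichotomy (VM ((-1 : KK))) (0 : Lex (Fin n →₀ ℤ)) with hx | hx | hx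
    · have : VM ((-1:KK)) + VM ((-1:KK)) < 0 + 0 := add_lt_add hx hx
      rw [hs, add_zero] at this
      exact absurd this (lt_irrefl _)
    · exact hx
    · have : (0:Lex (Fin n →₀ ℤ)) + 0 < VM ((-1:KK)) + VM ((-1:KK)) := add_lt_add hx hx
      rw [hs, add_zero] at this
      exact absurd this (lt_irrefl _)
  have h := VM_mul (a := (-1 : KK)) (b := a) (by norm_num) ha
  rw [neg_one_mul, hm1, zero_add] at h
  exact h

lemma VM_add {a b : KK} (ha : a ≠ 0) (hb : b ≠ 0) (hab : a + b ≠ 0) :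
    min (VM a) (VM b) ≤ VM (a + b) := by
  set na := IsFractionRing.num R a with hna
  set da := (IsFractionRing.den R a : R) with hda
  set nb := IsFractionRing.num R b with hnb
  set db := (IsFractionRing.den R b : R) with hdb
  have hna0 : na ≠ 0 := num_ne_zero ha
  have hnb0 : nb ≠ 0 := num_ne_zero hb
  have hda0 : da ≠ 0 := den_ne_zero a
  have hdb0 : db ≠ 0 := den_ne_zero b
  have hcross : (a + b) * algebraMap R KK (da * db)
      = algebraMap R KK (na * db + nb * da) := by
    rw [map_mul, map_add, map_mul, map_mul, hna, hnb, hda, hdb,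
      ← a_mul_den a, ← a_mul_den b]
    ring
  have hV := VM_eq hab (mul_ne_zero hda0 hdb0) hcross
  have hp : na * db + nb * da ≠ 0 := by
    intro h0
    rw [h0, map_zero] at hcross
    rcases mul_eq_zero.mp hcross with h' | h'
    · exact hab h'
    · exact (IsFractionRing.to_map_ne_zero_of_mem_nonZeroDivisors
        (mem_nonZeroDivisors_of_ne_zero (mul_ne_zero hda0 hdb0))) h'
  have hge : min (WM (na * db)) (WM (nb * da)) ≤ WM (na * db + nb * da) :=
    WM_add_ge (mul_ne_zero hna0 hdb0) (mul_ne_zero hnb0 hda0) hp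
  have hmin : min (VM a) (VM b)
      = min (WM (na * db)) (WM (nb * da)) - WM (da * db) := by
    rw [WM_mul hna0 hdb0, WM_mul hnb0 hda0, WM_mul hda0 hdb0, ← min_sub_sub_right]
    congr 1
    · rw [VM, ← hna, ← hda]; abel
    · rw [VM, ← hnb, ← hdb]; abel
  rw [hV, hmin]
  exact sub_le_sub_right hge _

lemma VM_steinberg {a b : KK} (ha : a ≠ 0) (hb : b ≠ 0) (hab : a + b = 1) :
    VM a = VM b ∨ VM a = 0 ∨ VM b = 0 := by
  have h1 : (1 : KK) ≠ 0 := one_ne_zero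
  have hmin : min (VM a) (VM b) ≤ 0 := by
    have h := VM_add ha hb (by rw [hab]; exact h1)
    rw [hab, VM_one] at h
    exact h
  have hA : min 0 (VM b) ≤ VM a := by
    have heq : (1 : KK) + (-b) = a := by rw [← hab]; ring
    have h := VM_add h1 (neg_ne_zero.mpr hb) (by rw [heq]; exact ha)
    rw [heq, VM_one, VM_neg hb] at h
    exact h
  have hB : min 0 (VM a) ≤ VM b := by
    have heq : (1 : KK) + (-a) = b := by rw [← hab]; ring
    have h := VM_add h1 (neg_ne_zero.mpr ha) (by rw [heq]; exact hb)
    rw [heq, VM_one, VM_neg ha] at h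
    exact h
  rcases lt_trichotomy (VM a) (0 : Lex (Fin n →₀ ℤ)) with h | h | h
  · left
    have hble : VM b ≤ VM a := by
      rcases le_total (0 : Lex (Fin n →₀ ℤ)) (VM b) with h' | h'
      · rw [min_eq_left h'] at hA
        exact absurd (lt_of_lt_of_le h hA) (lt_irrefl _)
      · rw [min_eq_right h'] at hA
        exact hA
    have hale : VM a ≤ VM b := by
      rw [min_eq_right h.le] at hB
      exact hB
    exact le_antisymm hale hble
  · right; left; exact h
  · right; right
    have h0b : (0 : Lex (Fin n →₀ ℤ)) ≤ VM b := by
      rw [min_eq_left h.le] at hB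
      exact hB
    have hble : VM b ≤ 0 := by
      by_contra h'
      push_neg at h'
      have hlt : (0 : Lex (Fin n →₀ ℤ)) < min (VM a) (VM b) := lt_min h h'
      exact absurd (lt_of_lt_of_le hlt hmin) (lt_irrefl _)
    exact le_antisymm hble h0b

end Valuation


/-! determinant invariant -/

section Det

variable {k : Type*} [Field k] {n : ℕ}

local notation "R" => MvPolynomial (Fin n) k
local notation "KK" => FractionRing (MvPolynomial (Fin n) k)

noncomputable def rowM (a : (FractionRing (MvPolynomial (Fin n) k))ˣ) : Fin n → ZMod 2 :=
  fun j => ((ofLex (VM ((a : FractionRing (MvPolynomial (Fin n) k)))) j : ℤ) : ZMod 2)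

noncomputable def MatM (v : Fin n → (FractionRing (MvPolynomial (Fin n) k))ˣ) :
    Matrix (Fin n) (Fin n) (ZMod 2) :=
  Matrix.of fun i j => rowM (v i) j

noncomputable def gdet (v : Fin n → (FractionRing (MvPolynomial (Fin n) k))ˣ) : ZMod 2 :=
  (MatM v).det

lemma rowM_mul (a b : KKˣ) : rowM (a * b) = rowM a + rowM b := by
  funext j
  have h : VM (((a * b : KKˣ) : KK)) = VM ((a : KK)) + VM ((b : KK)) := by
    rw [Units.val_mul]
    exact VM_mul (Units.ne_zero a) (Units.ne_zero b)
  show ((ofLex (VM (((a * b : KKˣ) : KK))) j : ℤ) : ZMod 2) = rowM a j + rowM b j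
  rw [h]
  have h2 : ofLex (VM ((a : KK)) + VM ((b : KK))) j
      = ofLex (VM ((a : KK))) j + ofLex (VM ((b : KK))) j := rfl
  rw [h2, Int.cast_add]
  rfl

lemma MatM_update (v : Fin n → KKˣ) (i : Fin n) (c : KKˣ) :
    MatM (Function.update v i c) = Matrix.updateRow (MatM v) i (rowM c) := by
  ext i' j
  by_cases h : i' = i
  · subst h
    rw [Matrix.updateRow_self]
    show rowM (Function.update v i' c i') j = rowM c j
    rw [Function.update_self]
  · rw [Matrix.updateRow_ne h]
    show rowM (Function.update v i c i') j = rowM (v i') j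
    rw [Function.update_of_ne h]

lemma F_rels (x : (Fin n → KKˣ) →₀ ZMod 2) (hx : x ∈ milnorRels KK n) :
    Finsupp.linearCombination (ZMod 2) gdet x = 0 := by
  rcases hx with ⟨v, i, uu, ww, rfl⟩ | ⟨v, i, j, hij, hsum, rfl⟩
  · rw [map_sub, map_sub, Finsupp.linearCombination_single,
      Finsupp.linearCombination_single, Finsupp.linearCombination_single,
      one_smul, one_smul, one_smul]
    have h : gdet (Function.update v i (uu * ww))
        = gdet (Function.update v i uu) + gdet (Function.update v i ww) := by
      rw [gdet, gdet, gdet, MatM_update, MatM_update, MatM_update, rowM_mul,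
        Matrix.det_updateRow_add]
    rw [h]
    ring
  · rw [Finsupp.linearCombination_single, one_smul]
    show (MatM v).det = 0
    have hi : ((v i : KK)) ≠ 0 := Units.ne_zero _
    have hj : ((v j : KK)) ≠ 0 := Units.ne_zero _
    rcases VM_steinberg hi hj hsum with h | h | h
    · apply Matrix.det_zero_of_row_eq hij
      funext col
      show ((ofLex (VM ((v i : KK))) col : ℤ) : ZMod 2)
        = ((ofLex (VM ((v j : KK))) col : ℤ) : ZMod 2)
      rw [h]
    · apply Matrix.det_eq_zero_of_row_eq_zero i
      intro col
      show ((ofLex (VM ((v i : KK))) col : ℤ) : ZMod 2) = 0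
      rw [h]
      rfl
    · apply Matrix.det_eq_zero_of_row_eq_zero j
      intro col
      show ((ofLex (VM ((v j : KK))) col : ℤ) : ZMod 2) = 0
      rw [h]
      rfl

lemma gdet_X (u : Fin n → KKˣ)
    (hu : ∀ i, ((u i : KK)) = algebraMap R KK (X i)) : gdet u = 1 := by
  have hMat : MatM u = 1 := by
    ext i j
    have hVu : VM ((u i : KK)) = embM (Finsupp.single i 1) := by
      have hne : ((u i : KK)) ≠ 0 := Units.ne_zero _
      have h := VM_eq hne (p := (X i : R)) (q := (1 : R)) one_ne_zero
        (by rw [map_one, mul_one, hu i])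
      rw [h, WM_one, WM_X, sub_zero]
    show ((ofLex (VM ((u i : KK))) j : ℤ) : ZMod 2) = (1 : Matrix (Fin n) (Fin n) (ZMod 2)) i j
    rw [hVu, embM_apply, Finsupp.single_apply, Matrix.one_apply]
    split_ifs with hij
    · simp
    · simp
  rw [gdet, hMat, Matrix.det_one]

end Det


/-- In the rational function field `K = k(x₁, …, xₙ)` over a field `k` of characteristic
different from `2` in which `-1` is a square, the symbol `α = {x₁, …, xₙ}` is nonzero in
mod 2 Milnor K-theory `K^M_n(K)/2`. -/
theorem milnorSymbol_X_ne_zero (k : Type*) [Field k] (hchar : ringChar k ≠ 2) (n : ℕ)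
    (hn : 1 ≤ n)
    (hsq : IsSquare (-1 : FractionRing (MvPolynomial (Fin n) k)))
    (u : Fin n → (FractionRing (MvPolynomial (Fin n) k))ˣ)
    (hu : ∀ i, (u i : FractionRing (MvPolynomial (Fin n) k)) =
      algebraMap (MvPolynomial (Fin n) k) _ (MvPolynomial.X i)) :
    milnorSymbol u ≠ 0 := by

  intro h0
  have hmem : Finsupp.single u (1 : ZMod 2) ∈
      Submodule.span (ZMod 2) (milnorRels (FractionRing (MvPolynomial (Fin n) k)) n) :=
    (Submodule.Quotient.mk_eq_zero _).mp h0
  have hker : Submodule.span (ZMod 2)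
      (milnorRels (FractionRing (MvPolynomial (Fin n) k)) n) ≤
      LinearMap.ker (Finsupp.linearCombination (ZMod 2) gdet) :=
    Submodule.span_le.mpr (fun x hx => F_rels x hx)
  have h1 : Finsupp.linearCombination (ZMod 2) gdet (Finsupp.single u (1 : ZMod 2)) = 0 :=
    hker hmem
  rw [Finsupp.linearCombination_single, one_smul, gdet_X u hu] at h1
  exact one_ne_zero h1
end
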